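/- Let E1, E2 be i.i.d. exponential random variables with rate 1 and U1, U2 be i.i.d. uniform random variables on [0,1], with all four variables mutually independent. Then the random variable (E1/U1)·(1 − U1·U2) has the same distribution as the random variable (E1 + E2/U1)·(1 − U1). -/

import Mathlib

/-!
Conditionally on the uniforms, `(E₁/U₁)(1 - U₁U₂)` is exponential with rate
`W = U₁/(1 - U₁U₂)`, so its survival function is `t ↦ E e^{-tW} = ∫ e^{-tw} ρ(w) dw`, where
`ρ(w) = (min w 1 - w/(1+w))/w²` is the density of `W` on `(0, ∞)`. Conditionally on `U₁ = u`,
`(E₁ + E₂/U₁)(1 - U₁)` is a sum of independent exponentials with scales `1 - u` and `(1 - u)/u`,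
whose survival function is explicit. Integrating it over `u` after the substitution
`u = w/(1+w)` gives `∫ e^{-tw}/(1+w) dw` minus `∫ e^{-tw}(w - 1)⁺/w² dw`, which is again
`∫ e^{-tw} ρ(w) dw`. Two laws on `(0, ∞)` with the same survival function coincide.
-/

open MeasureTheory ProbabilityTheory Real Set
open scoped ENNReal

lemma integral_exp_mul_add {k : ℝ} (hk : k ≠ 0) (m a b : ℝ) :
    ∫ x in a..b, exp (k * x + m) = (exp (k * b + m) - exp (k * a + m)) / k := by
  rw [intervalIntegral.integral_comp_mul_add _ hk, integral_exp, smul_eq_mul, inv_mul_eq_div]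

namespace ProbabilityTheory

lemma expMeasure_Ioi {r : ℝ} (hr : 0 < r) (a : ℝ) :
    expMeasure r (Ioi a) = ENNReal.ofReal (exp (-(r * max a 0))) := by
  have := isProbabilityMeasure_expMeasure hr
  rw [← compl_Iic, prob_compl_eq_one_sub measurableSet_Iic, ← ofReal_cdf, cdf_expMeasure_eq hr,
    ← ENNReal.ofReal_one,
    ← ENNReal.ofReal_sub _ (by split_ifs <;> simp [exp_le_one_iff]; positivity)]
  rcases le_or_gt 0 a with ha | ha
  · simp [ha]
  · simp [ha.not_ge, ha.le]

lemma lintegral_expMeasure {r : ℝ} {f : ℝ → ℝ≥0∞} (hf : Measurable f) :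
    ∫⁻ x, f x ∂expMeasure r = ∫⁻ x in Ici 0, ENNReal.ofReal (r * exp (-(r * x))) * f x := by
  rw [expMeasure, gammaMeasure, lintegral_withDensity_eq_lintegral_mul (f := gammaPDF 1 r) _
    (measurable_gammaPDFReal 1 r).ennreal_ofReal hf, ← lintegral_indicator measurableSet_Ici]
  congr 1 with x
  by_cases hx : 0 ≤ x
  · simp [hx, gammaPDF_eq]
  · simp [hx, gammaPDF_of_neg (not_le.1 hx)]

lemma lintegral_expMeasure_one_exp_neg_max {α β t : ℝ} (hα : 0 < α) (hβ : 0 < β)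
    (hαβ : α ≠ β) (ht : 0 ≤ t) :
    ∫⁻ x, ENNReal.ofReal (exp (-max ((t - α * x) / β) 0)) ∂expMeasure 1
      = ENNReal.ofReal ((α * exp (-(t / α)) - β * exp (-(t / β))) / (α - β)) := by
  have h_Icc : ∀ x ∈ Icc 0 (t / α), ENNReal.ofReal (exp (-x))
      * ENNReal.ofReal (exp (-max ((t - α * x) / β) 0))
      = ENNReal.ofReal (exp ((α / β - 1) * x + -(t / β))) := by
    intro x hx
    rw [max_eq_left (div_nonneg (by linarith [(le_div_iff₀' hα).1 hx.2]) hβ.le),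
      ← ENNReal.ofReal_mul (by positivity), ← exp_add]
    congr 2
    field_simp
    ring
  have h_Ioi : ∀ x ∈ Ioi (t / α), ENNReal.ofReal (exp (-x))
      * ENNReal.ofReal (exp (-max ((t - α * x) / β) 0)) = ENNReal.ofReal (exp (-x)) := by
    intro x hx
    rw [max_eq_right (div_nonpos_of_nonpos_of_nonneg
      (by linarith [(div_lt_iff₀' hα).1 hx]) hβ.le)]
    simp
  have hk : α / β - 1 ≠ 0 := by rwa [sub_ne_zero, ne_eq, div_eq_one_iff_eq hβ.ne']
  rw [lintegral_expMeasure (by fun_prop), ← Icc_union_Ioi_eq_Ici (div_nonneg ht hα.le),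
    lintegral_union measurableSet_Ioi ((Iic_disjoint_Ioi le_rfl).mono_left Icc_subset_Iic_self)]
  simp only [one_mul]
  rw [setLIntegral_congr_fun measurableSet_Icc h_Icc,
    setLIntegral_congr_fun measurableSet_Ioi h_Ioi,
    ← ofReal_integral_eq_lintegral_ofReal (by fun_prop : Continuous fun x =>
      exp ((α / β - 1) * x + -(t / β))).integrableOn_Icc (ae_of_all _ fun _ => (exp_pos _).le),
    ← ofReal_integral_eq_lintegral_ofReal
      (by simpa using (exp_neg_integrableOn_Ioi (t / α) one_pos).integrable)
      (ae_of_all _ fun _ => (exp_pos _).le),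
    integral_exp_neg_Ioi, ← ENNReal.ofReal_add (integral_nonneg fun _ => (exp_pos _).le)
      (exp_pos _).le, integral_Icc_eq_integral_Ioc,
    ← intervalIntegral.integral_of_le (div_nonneg ht hα.le), integral_exp_mul_add hk,
    mul_zero, zero_add, show (α / β - 1) * (t / α) + -(t / β) = -(t / α) by field_simp; ring]
  congr 1
  have := sub_ne_zero.2 hαβ
  field_simp
  ring

lemma expMeasure_one_prod_setOf_lt_mul_add_mul {α β t : ℝ} (hα : 0 < α) (hβ : 0 < β)
    (hαβ : α ≠ β) (ht : 0 ≤ t) :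
    ((expMeasure 1).prod (expMeasure 1)) {p | t < α * p.1 + β * p.2}
      = ENNReal.ofReal ((α * exp (-(t / α)) - β * exp (-(t / β))) / (α - β)) := by
  have := isProbabilityMeasure_expMeasure one_pos
  have hsection : ∀ x, Prod.mk x ⁻¹' {p : ℝ × ℝ | t < α * p.1 + β * p.2}
      = Ioi ((t - α * x) / β) := by
    intro x
    ext y
    simp only [mem_preimage, mem_ofPred_eq, mem_Ioi, div_lt_iff₀ hβ]
    constructor <;> intro <;> linarith
  rw [Measure.prod_apply (measurableSet_lt measurable_const (by fun_prop))]
  simp_rw [hsection, expMeasure_Ioi one_pos, one_mul]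
  exact lintegral_expMeasure_one_exp_neg_max hα hβ hαβ ht

lemma iIndepFun.map_prodMk_prodMk_eq_prod {Ω ι : Type*} {mΩ : MeasurableSpace Ω}
    {μ : Measure Ω} [IsProbabilityMeasure μ] {β : ι → Type*} [∀ i, MeasurableSpace (β i)]
    {f : ∀ i, Ω → β i} (h : iIndepFun f μ) (hf : ∀ i, Measurable (f i)) {i j k : ι}
    (hij : i ≠ j) (hik : i ≠ k) (hjk : j ≠ k) :
    μ.map (fun ω => (f i ω, f j ω, f k ω))
      = (μ.map (f i)).prod ((μ.map (f j)).prod (μ.map (f k))) := by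
  rw [((h.indepFun_prodMk hf j k i hij.symm hik.symm).symm).map_prod_eq_prod_map_map
      (hf i).aemeasurable ((hf j).prodMk (hf k)).aemeasurable,
    (h.indepFun hjk).map_prod_eq_prod_map_map (hf j).aemeasurable (hf k).aemeasurable]

end ProbabilityTheory

namespace MeasureTheory

lemma Measure.ext_of_measure_Ioi_pos {μ ν : Measure ℝ} [IsProbabilityMeasure μ]
    [IsProbabilityMeasure ν] (hμ : μ (Ioi 0) = 1) (hν : ν (Ioi 0) = 1)
    (h : ∀ t > 0, μ (Ioi t) = ν (Ioi t)) : μ = ν := by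
  have h_Iic : ∀ {ρ : Measure ℝ} [IsProbabilityMeasure ρ] (a : ℝ), ρ (Iic a) = 1 - ρ (Ioi a) :=
    fun a => by rw [← prob_compl_eq_one_sub measurableSet_Ioi, compl_Ioi]
  refine Measure.ext_of_Iic μ ν fun a => ?_
  rcases le_or_gt a 0 with ha | ha
  · have h_null : ∀ {ρ : Measure ℝ} [IsProbabilityMeasure ρ], ρ (Ioi 0) = 1 → ρ (Iic a) = 0 :=
      fun hρ => measure_mono_null (Iic_subset_Iic.2 ha) (by rw [h_Iic, hρ, tsub_self])
    rw [h_null hμ, h_null hν]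
  · rw [h_Iic, h_Iic, h a ha]

section Swap

variable {α β : Type*} [MeasurableSpace α] [MeasurableSpace β] {μ : Measure α} {ν : Measure β}

lemma lintegral_indicator_setOf_mem_and {A : Set α} {B : α → Set β} (hA : MeasurableSet A)
    (hB : ∀ a, MeasurableSet (B a)) (F : α → β → ℝ≥0∞) :
    ∫⁻ a, ∫⁻ b, {p : α × β | p.1 ∈ A ∧ p.2 ∈ B p.1}.indicator (Function.uncurry F) (a, b) ∂ν ∂μ
      = ∫⁻ a in A, ∫⁻ b in B a, F a b ∂ν ∂μ := by
  rw [← lintegral_indicator hA]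
  congr 1 with a
  by_cases ha : a ∈ A
  · rw [indicator_of_mem ha, ← lintegral_indicator (hB a)]
    congr 1 with b
    by_cases hb : b ∈ B a <;> simp [ha, hb]
  · simp [ha]

lemma lintegral_setLIntegral_swap [SFinite μ] [SFinite ν] {A : Set α} {B : α → Set β}
    {C : Set β} {D : β → Set α} (hA : MeasurableSet A) (hB : ∀ a, MeasurableSet (B a))
    (hC : MeasurableSet C) (hD : ∀ b, MeasurableSet (D b))
    (hS : MeasurableSet {p : α × β | p.1 ∈ A ∧ p.2 ∈ B p.1})
    (hAB : ∀ a b, a ∈ A ∧ b ∈ B a ↔ b ∈ C ∧ a ∈ D b) {F : α → β → ℝ≥0∞}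
    (hF : Measurable (Function.uncurry F)) :
    ∫⁻ a in A, ∫⁻ b in B a, F a b ∂ν ∂μ = ∫⁻ b in C, ∫⁻ a in D b, F a b ∂μ ∂ν := by
  rw [← lintegral_indicator_setOf_mem_and hA hB, ← lintegral_indicator_setOf_mem_and hC hD,
    lintegral_lintegral_swap (f := fun a b =>
      {p : α × β | p.1 ∈ A ∧ p.2 ∈ B p.1}.indicator (Function.uncurry F) (a, b))
      (hF.indicator hS).aemeasurable]
  congr 1 with b
  congr 1 with a
  by_cases h : b ∈ C ∧ a ∈ D b <;> simp [hAB, h]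

end Swap

lemma setLIntegral_Ioi_zero_comp_add_left {f : ℝ → ℝ≥0∞} {a : ℝ} (hf : f.support ⊆ Ioi a) :
    ∫⁻ w in Ioi 0, f (a + w) = ∫⁻ w, f w := by
  rw [setLIntegral_eq_of_support_subset, lintegral_add_left_eq_self]
  intro w hw
  have := hf hw
  simp only [mem_Ioi] at this ⊢
  linarith

end MeasureTheory

noncomputable def rateDensity (w : ℝ) : ℝ := (min w 1 - w / (1 + w)) / w ^ 2

lemma rateDensity_nonneg {w : ℝ} (hw : 0 < w) : 0 ≤ rateDensity w := by
  refine div_nonneg (sub_nonneg.2 (le_min ?_ ?_)) (sq_nonneg w) <;>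
    rw [div_le_iff₀ (by linarith)] <;> nlinarith

lemma rateDensity_add_max_sub_one_div_sq {w : ℝ} (hw : 0 < w) :
    rateDensity w + (max w 1 - 1) / w ^ 2 = 1 / (1 + w) := by
  have h := min_add_max w 1
  rw [rateDensity]
  field_simp
  linear_combination (1 + w) * h

lemma ofReal_rateDensity_mul_add {w c : ℝ} (hw : 0 < w) (hc : 0 ≤ c) :
    ENNReal.ofReal (rateDensity w) * ENNReal.ofReal c
      + ENNReal.ofReal (c * ((max w 1 - 1) / w ^ 2)) = ENNReal.ofReal (c / (1 + w)) := by
  rw [← ENNReal.ofReal_mul (rateDensity_nonneg hw), ← ENNReal.ofReal_add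
    (mul_nonneg (rateDensity_nonneg hw) hc)
    (mul_nonneg hc (div_nonneg (sub_nonneg.2 (le_max_right _ _)) (sq_nonneg w))),
    mul_comm, ← mul_add, rateDensity_add_max_sub_one_div_sq hw, mul_one_div]

lemma image_div_one_sub_mul_Ioo {u : ℝ} (hu : u ∈ Ioo 0 1) :
    (fun v => u / (1 - u * v)) '' Ioo 0 1 = Ioo u (u / (1 - u)) := by
  obtain ⟨hu0, hu1⟩ := hu
  ext w
  constructor
  · rintro ⟨v, ⟨hv0, hv1⟩, rfl⟩
    have huv : 0 < 1 - u * v := by nlinarith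
    constructor
    · rw [lt_div_iff₀ huv]; nlinarith [mul_pos hu0 (mul_pos hu0 hv0)]
    · rw [div_lt_div_iff₀ huv (by linarith)]
      nlinarith [mul_pos (mul_pos hu0 hu0) (by linarith : (0 : ℝ) < 1 - v)]
  · rintro ⟨hw1, hw2⟩
    have hw0 : 0 < w := hu0.trans hw1
    have hwu : w * (1 - u) < u := (lt_div_iff₀ (by linarith)).1 hw2
    refine ⟨(w - u) / (u * w), ⟨div_pos (by linarith) (by positivity), ?_⟩, ?_⟩
    · rw [div_lt_one (by positivity)]; nlinarith
    · show u / (1 - u * ((w - u) / (u * w))) = w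
      rw [show 1 - u * ((w - u) / (u * w)) = u / w by field_simp; ring]
      field_simp

lemma setLIntegral_Ioo_comp_div_one_sub_mul {u : ℝ} (hu : u ∈ Ioo 0 1) (g : ℝ → ℝ≥0∞) :
    ∫⁻ v in Ioo 0 1, g (u / (1 - u * v))
      = ∫⁻ w in Ioo u (u / (1 - u)), ENNReal.ofReal (w ^ 2)⁻¹ * g w := by
  obtain ⟨hu0, hu1⟩ := hu
  have hpos : ∀ v ∈ Ioo (0 : ℝ) 1, 0 < 1 - u * v := fun v hv => by nlinarith [hv.1, hv.2]
  -- the derivative `u² / (1 - u v)²` is the square of the new variable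
  have hderiv : ∀ v ∈ Ioo (0 : ℝ) 1, HasDerivWithinAt (fun v => u / (1 - u * v))
      ((u / (1 - u * v)) ^ 2) (Ioo 0 1) v := by
    intro v hv
    have := (hpos v hv).ne'
    exact (((hasDerivAt_const v u).div (((hasDerivAt_id v).const_mul u).const_sub 1)
      this).congr_deriv (by simp only [id]; field_simp; ring)).hasDerivWithinAt
  have hinj : InjOn (fun v => u / (1 - u * v)) (Ioo 0 1) := by
    intro a ha b hb hab
    rw [div_eq_div_iff (hpos a ha).ne' (hpos b hb).ne'] at hab
    nlinarith [mul_pos hu0 hu0]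
  rw [← image_div_one_sub_mul_Ioo ⟨hu0, hu1⟩,
    lintegral_image_eq_lintegral_abs_deriv_mul measurableSet_Ioo hderiv hinj]
  refine setLIntegral_congr_fun measurableSet_Ioo fun v hv => ?_
  have : 0 < u / (1 - u * v) := div_pos hu0 (hpos v hv)
  rw [← mul_assoc, ← ENNReal.ofReal_mul (abs_nonneg _), abs_of_pos (by positivity),
    mul_inv_cancel₀ (by positivity), ENNReal.ofReal_one, one_mul]

lemma mem_Ioo_and_mem_Ioo_div_one_sub_iff {u w : ℝ} :
    u ∈ Ioo 0 1 ∧ w ∈ Ioo u (u / (1 - u)) ↔ w ∈ Ioi 0 ∧ u ∈ Ioo (w / (1 + w)) (min w 1) := by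
  simp only [mem_Ioo, mem_Ioi, lt_min_iff]
  constructor
  · rintro ⟨⟨hu0, hu1⟩, huw, hw⟩
    have hw' := (lt_div_iff₀ (by linarith : (0 : ℝ) < 1 - u)).1 hw
    exact ⟨hu0.trans huw, (div_lt_iff₀ (by linarith)).2 (by linarith), huw, hu1⟩
  · rintro ⟨hw0, hw, huw, hu1⟩
    have hw' := (div_lt_iff₀ (by linarith : (0 : ℝ) < 1 + w)).1 hw
    exact ⟨⟨by nlinarith, hu1⟩, huw, (lt_div_iff₀ (by linarith)).2 (by linarith)⟩

lemma lintegral_unitSquare_comp_div_one_sub_mul {g : ℝ → ℝ≥0∞} (hg : Measurable g) :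
    ∫⁻ u in Ioo 0 1, ∫⁻ v in Ioo 0 1, g (u / (1 - u * v))
      = ∫⁻ w in Ioi 0, ENNReal.ofReal (rateDensity w) * g w := by
  calc ∫⁻ u in Ioo 0 1, ∫⁻ v in Ioo 0 1, g (u / (1 - u * v))
      = ∫⁻ u in Ioo 0 1, ∫⁻ w in Ioo u (u / (1 - u)), ENNReal.ofReal (w ^ 2)⁻¹ * g w :=
        setLIntegral_congr_fun measurableSet_Ioo fun u hu =>
          setLIntegral_Ioo_comp_div_one_sub_mul hu g
    _ = ∫⁻ w in Ioi 0, ∫⁻ _ in Ioo (w / (1 + w)) (min w 1), ENNReal.ofReal (w ^ 2)⁻¹ * g w :=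
        lintegral_setLIntegral_swap measurableSet_Ioo (fun _ => measurableSet_Ioo)
          measurableSet_Ioi (fun _ => measurableSet_Ioo) (by measurability)
          (fun _ _ => mem_Ioo_and_mem_Ioo_div_one_sub_iff) (by fun_prop)
    _ = ∫⁻ w in Ioi 0, ENNReal.ofReal (rateDensity w) * g w := by
        refine setLIntegral_congr_fun measurableSet_Ioi fun w hw => ?_
        rw [setLIntegral_const, Real.volume_Ioo, mul_right_comm,
          ← ENNReal.ofReal_mul (by positivity), rateDensity, div_eq_inv_mul _ (w ^ 2)]

/-- The survival function at `t` of `(1 - u) E₁ + ((1 - u) / u) E₂` for independent standard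
exponentials `E₁, E₂`. -/
noncomputable def hypoexpSurvival (t u : ℝ) : ℝ :=
  (exp (-(t * (u / (1 - u)))) - u * exp (-(t / (1 - u)))) / (1 - u)

lemma hypoexpSurvival_div_one_add (t : ℝ) {w : ℝ} (hw : 0 < w) :
    hypoexpSurvival t (w / (1 + w)) = (1 + w) * exp (-(t * w)) - w * exp (-(t * (1 + w))) := by
  have h1w : 1 - w / (1 + w) = (1 + w)⁻¹ := by field_simp; ring
  rw [hypoexpSurvival, h1w, show w / (1 + w) / (1 + w)⁻¹ = w by field_simp, div_inv_eq_mul,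
    div_inv_eq_mul]
  field_simp

lemma setLIntegral_Ioo_eq_setLIntegral_Ioi_div_one_add (g : ℝ → ℝ≥0∞) :
    ∫⁻ u in Ioo 0 1, g u = ∫⁻ w in Ioi 0, ENNReal.ofReal ((1 + w) ^ 2)⁻¹ * g (w / (1 + w)) := by
  have himage : (fun w : ℝ => w / (1 + w)) '' Ioi 0 = Ioo 0 1 := by
    ext u
    constructor
    · rintro ⟨w, hw, rfl⟩
      have hw : (0 : ℝ) < w := hw
      exact ⟨by positivity, (div_lt_one (by linarith)).2 (by linarith)⟩
    · rintro ⟨hu0, hu1⟩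
      refine ⟨u / (1 - u), div_pos hu0 (by linarith), ?_⟩
      have : 1 - u ≠ 0 := by linarith
      field_simp
      ring
  have hderiv : ∀ w ∈ Ioi (0 : ℝ), HasDerivWithinAt (fun w => w / (1 + w))
      ((1 + w) ^ 2)⁻¹ (Ioi 0) w := by
    intro w hw
    have hw : (1 : ℝ) + w ≠ 0 := by linarith [mem_Ioi.1 hw]
    exact (((hasDerivAt_id w).div ((hasDerivAt_id w).const_add 1) hw).congr_deriv
      (by simp only [id]; field_simp; ring)).hasDerivWithinAt
  have hinj : InjOn (fun w : ℝ => w / (1 + w)) (Ioi 0) := by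
    intro a ha b hb hab
    simp only at hab
    rw [div_eq_div_iff (by linarith [mem_Ioi.1 ha]) (by linarith [mem_Ioi.1 hb])] at hab
    linarith
  rw [← himage, lintegral_image_eq_lintegral_abs_deriv_mul measurableSet_Ioi hderiv hinj]
  refine setLIntegral_congr_fun measurableSet_Ioi fun w hw => ?_
  have hw : (0 : ℝ) < w := hw
  rw [abs_of_pos (by positivity)]

lemma setLIntegral_Ioi_exp_mul_max_sub_one_div_sq_ne_top {t : ℝ} (ht : 0 < t) :
    ∫⁻ w in Ioi 0, ENNReal.ofReal (exp (-(t * w)) * ((max w 1 - 1) / w ^ 2)) ≠ ∞ := by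
  refine ne_top_of_le_ne_top ((exp_neg_integrableOn_Ioi 0 ht).setLIntegral_lt_top).ne
    (setLIntegral_mono (by fun_prop) fun w _ => ENNReal.ofReal_le_ofReal ?_)
  rw [neg_mul]
  refine mul_le_of_le_one_right (exp_pos _).le (div_le_one_of_le₀ ?_ (sq_nonneg w))
  exact sub_le_iff_le_add.2 (max_le (by nlinarith [sq_nonneg (w - 1)]) (by nlinarith))

lemma setLIntegral_Ioo_hypoexpSurvival {t : ℝ} (ht : 0 < t) :
    ∫⁻ u in Ioo 0 1, ENNReal.ofReal (hypoexpSurvival t u)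
      = ∫⁻ w in Ioi 0, ENNReal.ofReal (rateDensity w) * ENNReal.ofReal (exp (-(t * w))) := by
  -- both sides fall short of `∫ e^{-tw} / (1 + w)` by `∫ B`, the left one in the form
  -- `∫ B (1 + w)`; cancelling it needs `∫ B < ∞`, hence `t > 0`
  set B : ℝ → ℝ≥0∞ := fun w => ENNReal.ofReal (exp (-(t * w)) * ((max w 1 - 1) / w ^ 2))
  have hB_support : B.support ⊆ Ioi 1 := by
    intro w hw
    by_contra h
    simp [B, max_eq_right (not_lt.1 (mt mem_Ioi.2 h))] at hw
  have hB_finite : ∫⁻ w, B w ≠ ∞ := by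
    rw [← setLIntegral_eq_of_support_subset (hB_support.trans (Ioi_subset_Ioi zero_le_one))]
    exact setLIntegral_Ioi_exp_mul_max_sub_one_div_sq_ne_top ht
  have h_left : ∀ w ∈ Ioi (0 : ℝ), ENNReal.ofReal ((1 + w) ^ 2)⁻¹
      * ENNReal.ofReal (hypoexpSurvival t (w / (1 + w))) + B (1 + w)
      = ENNReal.ofReal (exp (-(t * w)) / (1 + w)) := by
    intro w hw
    have hw : 0 < w := hw
    have hexp : exp (-(t * (1 + w))) ≤ exp (-(t * w)) := exp_le_exp.2 (by nlinarith)
    have hS : 0 ≤ (1 + w) * exp (-(t * w)) - w * exp (-(t * (1 + w))) :=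
      sub_nonneg.2 (mul_le_mul (by linarith) hexp (exp_pos _).le (by linarith))
    simp only [B]
    rw [hypoexpSurvival_div_one_add t hw, max_eq_left (by linarith), add_sub_cancel_left,
      ← ENNReal.ofReal_mul (by positivity), ← ENNReal.ofReal_add (by positivity) (by positivity)]
    congr 1
    field_simp
    ring
  rw [setLIntegral_Ioo_eq_setLIntegral_Ioi_div_one_add]
  refine (ENNReal.add_left_inj hB_finite).1 ?_
  calc _ = ∫⁻ w in Ioi 0, ENNReal.ofReal (exp (-(t * w)) / (1 + w)) := by
        rw [← setLIntegral_Ioi_zero_comp_add_left hB_support,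
          ← lintegral_add_right _ (by fun_prop)]
        exact setLIntegral_congr_fun measurableSet_Ioi h_left
    _ = _ := by
        rw [← setLIntegral_eq_of_support_subset (hB_support.trans (Ioi_subset_Ioi zero_le_one)),
          ← lintegral_add_right _ (by fun_prop)]
        exact (setLIntegral_congr_fun measurableSet_Ioi fun w hw =>
          ofReal_rateDensity_mul_add hw (exp_pos _).le).symm

lemma map_uniform_prod_uniform_prod_expMeasure_Ioi {t : ℝ} (ht : 0 ≤ t) :
    (((volume.restrict (Ioo 0 1)).prod ((volume.restrict (Ioo 0 1)).prod (expMeasure 1))).map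
        fun p : ℝ × ℝ × ℝ => p.2.2 / p.1 * (1 - p.1 * p.2.1)) (Ioi t)
      = ∫⁻ u in Ioo 0 1, ∫⁻ v in Ioo 0 1, ENNReal.ofReal (exp (-(t * (u / (1 - u * v))))) := by
  have := isProbabilityMeasure_expMeasure one_pos
  rw [Measure.map_apply (by fun_prop) measurableSet_Ioi,
    Measure.prod_apply (measurableSet_Ioi.preimage (by fun_prop))]
  refine setLIntegral_congr_fun measurableSet_Ioo fun u ⟨hu0, hu1⟩ => ?_
  rw [Measure.prod_apply (measurable_prodMk_left (measurableSet_Ioi.preimage (by fun_prop)))]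
  refine setLIntegral_congr_fun measurableSet_Ioo fun v ⟨hv0, hv1⟩ => ?_
  have huv : 0 < 1 - u * v := by nlinarith
  have hsection : Prod.mk v ⁻¹' (Prod.mk u ⁻¹'
      ((fun p : ℝ × ℝ × ℝ => p.2.2 / p.1 * (1 - p.1 * p.2.1)) ⁻¹' Ioi t))
      = Ioi (t * (u / (1 - u * v))) := by
    ext e
    simp only [mem_preimage, mem_Ioi]
    rw [div_mul_eq_mul_div, lt_div_iff₀ hu0, ← div_lt_iff₀ huv]
    ring_nf
  rw [hsection, expMeasure_Ioi one_pos, max_eq_left (by positivity), one_mul]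

lemma map_uniform_prod_expMeasure_prod_expMeasure_Ioi {t : ℝ} (ht : 0 ≤ t) :
    (((volume.restrict (Ioo 0 1)).prod ((expMeasure 1).prod (expMeasure 1))).map
        fun p : ℝ × ℝ × ℝ => (p.2.1 + p.2.2 / p.1) * (1 - p.1)) (Ioi t)
      = ∫⁻ u in Ioo 0 1, ENNReal.ofReal (hypoexpSurvival t u) := by
  have := isProbabilityMeasure_expMeasure one_pos
  rw [Measure.map_apply (by fun_prop) measurableSet_Ioi,
    Measure.prod_apply (measurableSet_Ioi.preimage (by fun_prop))]
  refine setLIntegral_congr_fun measurableSet_Ioo fun u ⟨hu0, hu1⟩ => ?_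
  have h1u : 0 < 1 - u := by linarith
  have hsection : Prod.mk u ⁻¹' ((fun p : ℝ × ℝ × ℝ => (p.2.1 + p.2.2 / p.1) * (1 - p.1)) ⁻¹' Ioi t)
      = {q : ℝ × ℝ | t < (1 - u) * q.1 + (1 - u) / u * q.2} := by
    ext q
    simp only [mem_preimage, mem_Ioi, mem_ofPred_eq]
    ring_nf
  rw [hsection, expMeasure_one_prod_setOf_lt_mul_add_mul h1u
    (by positivity) (fun h => by field_simp at h; linarith) ht, hypoexpSurvival]
  congr 1
  have := hu0.ne'
  have := h1u.ne'
  rw [show t / ((1 - u) / u) = t * (u / (1 - u)) by field_simp,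
    show 1 - u - (1 - u) / u = -((1 - u) ^ 2 / u) by field_simp; ring]
  field_simp
  ring

lemma map_uniform_prod_expMeasure_identity :
    (((volume.restrict (Ioo 0 1)).prod ((volume.restrict (Ioo 0 1)).prod (expMeasure 1))).map
        fun p : ℝ × ℝ × ℝ => p.2.2 / p.1 * (1 - p.1 * p.2.1))
      = ((volume.restrict (Ioo 0 1)).prod ((expMeasure 1).prod (expMeasure 1))).map
        fun p : ℝ × ℝ × ℝ => (p.2.1 + p.2.2 / p.1) * (1 - p.1) := by
  have := isProbabilityMeasure_expMeasure one_pos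
  have : IsProbabilityMeasure (volume.restrict (Ioo (0 : ℝ) 1)) := ⟨by simp⟩
  refine @Measure.ext_of_measure_Ioi_pos _ _ (Measure.isProbabilityMeasure_map (by fun_prop))
    (Measure.isProbabilityMeasure_map (by fun_prop)) ?_ ?_ fun t ht => ?_
  · simp [map_uniform_prod_uniform_prod_expMeasure_Ioi le_rfl]
  · rw [map_uniform_prod_expMeasure_prod_expMeasure_Ioi le_rfl,
      setLIntegral_congr_fun measurableSet_Ioo fun u hu => by
        rw [hypoexpSurvival, zero_mul, zero_div, neg_zero, exp_zero, mul_one,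
          div_self (by linarith [hu.2])]]
    simp
  · rw [map_uniform_prod_uniform_prod_expMeasure_Ioi ht.le,
      map_uniform_prod_expMeasure_prod_expMeasure_Ioi ht.le,
      lintegral_unitSquare_comp_div_one_sub_mul (g := fun w => ENNReal.ofReal (exp (-(t * w))))
        (by fun_prop), setLIntegral_Ioo_hypoexpSurvival ht]

/-- Identity (2) of the paper: `(E₁/U₁)(1 - U₁U₂) =ᵈ (E₁ + E₂/U₁)(1 - U₁)` for
independent rate-one exponential `E₁, E₂` and uniform-`[0,1]` `U₁, U₂`. -/
theorem exp_uniform_identity_small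
    {Ω : Type*} [MeasureSpace Ω] [IsProbabilityMeasure (ℙ : Measure Ω)]
    (E U : Fin 2 → Ω → ℝ)
    (hmE : ∀ i, Measurable (E i)) (hmU : ∀ i, Measurable (U i))
    (hE : ∀ i, Measure.map (E i) ℙ = expMeasure 1)
    (hU : ∀ i, Measure.map (U i) ℙ = volume.restrict (Set.Icc (0 : ℝ) 1))
    (hindep : iIndepFun (Sum.elim E U) ℙ) :
    Measure.map (fun ω => (E 0 ω / U 0 ω) * (1 - U 0 ω * U 1 ω)) ℙ
      = Measure.map (fun ω => (E 0 ω + E 1 ω / U 0 ω) * (1 - U 0 ω)) ℙ := by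
  have hU' : ∀ i, Measure.map (U i) ℙ = volume.restrict (Ioo (0 : ℝ) 1) := fun i =>
    (hU i).trans (Measure.restrict_congr_set Ioo_ae_eq_Icc).symm
  have hmeas : ∀ i, Measurable (Sum.elim E U i) := Sum.forall.2 ⟨hmE, hmU⟩
  have hlawX := hindep.map_prodMk_prodMk_eq_prod hmeas (i := .inr 0) (j := .inr 1) (k := .inl 0)
    (by simp) (by simp) (by simp)
  have hlawY := hindep.map_prodMk_prodMk_eq_prod hmeas (i := .inr 0) (j := .inl 0) (k := .inl 1)
    (by simp) (by simp) (by simp)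
  simp only [Sum.elim_inl, Sum.elim_inr, hU', hE] at hlawX hlawY
  calc _ = (Measure.map (fun ω => (U 0 ω, U 1 ω, E 0 ω)) ℙ).map
          fun p : ℝ × ℝ × ℝ => p.2.2 / p.1 * (1 - p.1 * p.2.1) := by
        rw [Measure.map_map (by fun_prop) (by fun_prop)]
        rfl
    _ = (Measure.map (fun ω => (U 0 ω, E 0 ω, E 1 ω)) ℙ).map
          fun p : ℝ × ℝ × ℝ => (p.2.1 + p.2.2 / p.1) * (1 - p.1) := by
        rw [hlawX, hlawY, map_uniform_prod_expMeasure_identity]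
    _ = _ := by
        rw [Measure.map_map (by fun_prop) (by fun_prop)]
        rfl
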